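/- Let F and G be cumulative distribution functions with ∫_{−∞}^0 F(y) dy < ∞ and ∫_{−∞}^0 G(y) dy < ∞, let α ∈ (0,1), and let λ ∈ [0,1]. Then CVaR_α(λF + (1−λ)G) ≤ λ·CVaR_α(F) + (1−λ)·CVaR_α(G); that is, the conditional value-at-risk is convex on the set of CDFs with integrable lower tail. -/

import Mathlib

open MeasureTheory

/-- A cumulative distribution function: nondecreasing, right-continuous,
tending to `0` at `−∞` and to `1` at `+∞`. -/
def IsCDF (F : ℝ → ℝ) : Prop :=
  Monotone F ∧ (∀ y : ℝ, ContinuousWithinAt F (Set.Ici y) y) ∧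
    Filter.Tendsto F Filter.atBot (nhds 0) ∧ Filter.Tendsto F Filter.atTop (nhds 1)

/-- Value-at-risk at level `α`: `VaR_α(F) = inf{ y : F y ≥ α }`. -/
noncomputable def VaR (α : ℝ) (F : ℝ → ℝ) : ℝ :=
  sInf {y : ℝ | α ≤ F y}

/-- Conditional value-at-risk at level `α`:
`CVaR_α(F) = VaR_α(F) − (1/α) ∫_{−∞}^{VaR_α(F)} F(y) dy`. -/
noncomputable def CVaR (α : ℝ) (F : ℝ → ℝ) : ℝ :=
  VaR α F - (1 / α) * ∫ y in Set.Iio (VaR α F), F y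

/-!
Rockafellar–Uryasev: `CVaR_α(F) = max_x (x - (1/α) ∫_{-∞}^x F)`, the maximum being attained
at `x = VaR_α(F)`, because the derivative `1 - F(x)/α` of the objective is `≥ 0` left of
`VaR_α(F)` and `≤ 0` right of it. The objective is affine in `F`, so `CVaR_α`, a pointwise
maximum of affine functionals, is convex: evaluating at `x = VaR_α(λF + (1-λ)G)` suffices.
-/

open Set

noncomputable def cvarObjective (α : ℝ) (F : ℝ → ℝ) (x : ℝ) : ℝ :=
  x - (1 / α) * ∫ y in Iio x, F y

theorem Monotone.integrableOn_Iio_of_integrableOn_Iic {F : ℝ → ℝ} (hmono : Monotone F)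
    {a : ℝ} (ha : IntegrableOn F (Iic a)) (b : ℝ) : IntegrableOn F (Iio b) :=
  have hIcc : IntegrableOn F (Icc a b) :=
    (hmono.locallyIntegrable (μ := volume)).integrableOn_isCompact isCompact_Icc
  (ha.union hIcc).mono_set fun y hy => (le_total y a).imp id fun hay => ⟨hay, (mem_Iio.1 hy).le⟩

namespace IsCDF

variable {F : ℝ → ℝ} {α : ℝ}

theorem bddBelow_setOf_le (hF : IsCDF F) (hα : 0 < α) : BddBelow {y | α ≤ F y} := by
  obtain ⟨b, hb⟩ := Filter.eventually_atBot.1 (hF.2.2.1.eventually (eventually_lt_nhds hα))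
  exact ⟨b, fun y hy => le_of_not_gt fun hyb => (hb y hyb.le).not_ge hy⟩

theorem nonempty_setOf_le (hF : IsCDF F) (hα : α < 1) : {y | α ≤ F y}.Nonempty :=
  ((hF.2.2.2.eventually (eventually_gt_nhds hα)).exists).imp fun _ => le_of_lt

theorem le_apply_VaR (hF : IsCDF F) (hα : α ∈ Ioo 0 1) : α ≤ F (VaR α F) := by
  have right_of_VaR : ∀ z ∈ Ioi (VaR α F), α ≤ F z := fun z hz => by
    obtain ⟨w, hw, hwz⟩ := exists_lt_of_csInf_lt (hF.nonempty_setOf_le hα.2) hz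
    exact hw.trans (hF.1 hwz.le)
  exact ge_of_tendsto ((hF.2.1 _).mono Ioi_subset_Ici_self)
    (eventually_mem_nhdsWithin.mono right_of_VaR)

theorem le_apply_iff_VaR_le (hF : IsCDF F) (hα : α ∈ Ioo 0 1) {y : ℝ} :
    α ≤ F y ↔ VaR α F ≤ y :=
  ⟨fun h => csInf_le (hF.bddBelow_setOf_le hα.1) h,
    fun h => (hF.le_apply_VaR hα).trans (hF.1 h)⟩

theorem apply_lt_iff_lt_VaR (hF : IsCDF F) (hα : α ∈ Ioo 0 1) {y : ℝ} :
    F y < α ↔ y < VaR α F := by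
  simpa only [not_le] using (hF.le_apply_iff_VaR_le hα).not

theorem mul_sub_VaR_le_integral (hF : IsCDF F) (hα : α ∈ Ioo 0 1) (x : ℝ) :
    α * (x - VaR α F) ≤ ∫ y in VaR α F..x, F y := by
  set v := VaR α F
  rcases le_or_gt v x with hvx | hxv
  · calc α * (x - v) = ∫ _ in v..x, α := by simp [mul_comm]
      _ ≤ ∫ y in v..x, F y :=
        intervalIntegral.integral_mono_on hvx intervalIntegrable_const
          hF.1.intervalIntegrable fun y hy => (hF.le_apply_iff_VaR_le hα).2 hy.1
  · have below_VaR : ∫ y in x..v, F y ≤ ∫ _ in x..v, α :=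
      intervalIntegral.integral_mono_on_of_le_Ioo hxv.le hF.1.intervalIntegrable
        intervalIntegrable_const fun y hy => ((hF.apply_lt_iff_lt_VaR hα).2 hy.2).le
    rw [intervalIntegral.integral_symm]
    simp only [intervalIntegral.integral_const, smul_eq_mul] at below_VaR
    nlinarith

theorem cvarObjective_le_CVaR (hF : IsCDF F) (hInt : IntegrableOn F (Iic 0))
    (hα : α ∈ Ioo 0 1) (x : ℝ) : cvarObjective α F x ≤ CVaR α F := by
  have hdiff : (∫ y in Iio x, F y) - ∫ y in Iio (VaR α F), F y = ∫ y in VaR α F..x, F y :=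
    intervalIntegral.integral_Iio_sub_Iio' (hF.1.integrableOn_Iio_of_integrableOn_Iic hInt x)
      (hF.1.integrableOn_Iio_of_integrableOn_Iic hInt _)
  have key :
      x - VaR α F ≤ (1 / α) * ((∫ y in Iio x, F y) - ∫ y in Iio (VaR α F), F y) := by
    rw [hdiff, one_div_mul_eq_div, le_div_iff₀' hα.1]
    exact hF.mul_sub_VaR_le_integral hα x
  rw [cvarObjective, CVaR]
  linarith

end IsCDF

theorem cvarObjective_affineCombination {F G : ℝ → ℝ} {x : ℝ}
    (hF : IntegrableOn F (Iio x)) (hG : IntegrableOn G (Iio x)) (α a b : ℝ)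
    (hab : a + b = 1) :
    cvarObjective α (fun y => a * F y + b * G y) x =
      a * cvarObjective α F x + b * cvarObjective α G x := by
  simp only [cvarObjective, integral_add (hF.const_mul a) (hG.const_mul b), integral_const_mul]
  linear_combination (-x) * hab

/-- Convexity of CVaR on the set of CDFs with integrable lower tail:
`CVaR_α(λF + (1−λ)G) ≤ λ CVaR_α(F) + (1−λ) CVaR_α(G)`. -/
theorem CVaR_convex (F G : ℝ → ℝ) (hF : IsCDF F) (hG : IsCDF G)
    (hIntF : IntegrableOn F (Set.Iic (0 : ℝ)))
    (hIntG : IntegrableOn G (Set.Iic (0 : ℝ)))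
    (α : ℝ) (hα : α ∈ Set.Ioo (0 : ℝ) 1)
    (lam : ℝ) (hlam : lam ∈ Set.Icc (0 : ℝ) 1) :
    CVaR α (fun y => lam * F y + (1 - lam) * G y) ≤
      lam * CVaR α F + (1 - lam) * CVaR α G := by
  set v := VaR α (fun y => lam * F y + (1 - lam) * G y)
  calc CVaR α (fun y => lam * F y + (1 - lam) * G y)
      = cvarObjective α (fun y => lam * F y + (1 - lam) * G y) v := rfl
    _ = lam * cvarObjective α F v + (1 - lam) * cvarObjective α G v :=
      cvarObjective_affineCombination (hF.1.integrableOn_Iio_of_integrableOn_Iic hIntF v)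
        (hG.1.integrableOn_Iio_of_integrableOn_Iic hIntG v) α _ _ (add_sub_cancel lam 1)
    _ ≤ lam * CVaR α F + (1 - lam) * CVaR α G := by
      gcongr
      · exact hlam.1
      · exact hF.cvarObjective_le_CVaR hIntF hα v
      · linarith [hlam.2]
      · exact hG.cvarObjective_le_CVaR hIntG hα v
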